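/- With N independent identical product-channel terms and perfect phase alignment (φ_n = 0), if E[c₀²] = ς, E[a_n²] = ϱ, E[b_n²] = ϑ, and each of c₀, a_n, b_n is Rayleigh, then E[(c₀ + ∑_{n=1}^N a_n b_n)²] = ς + Nϱϑ + (π²N(N-1)/16)·ϱϑ + (πN/4)·√(πςϱϑ). -/

import Mathlib

/-!
Put `X₀ = c₀` and `Xₙ = aₙbₙ`. These terms are functions of disjoint blocks of the independent
family, hence pairwise independent, so the variance of their sum is additive and
`E[(∑ Xᵢ)²] = ∑ (E[Xᵢ²] - E[Xᵢ]²) + (∑ E[Xᵢ])²`. Independence of `aₙ` and `bₙ` gives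
`E[aₙbₙ] = E[aₙ]E[bₙ]` and `E[(aₙbₙ)²] = E[aₙ²]E[bₙ²]`, and the Rayleigh moments
`∫ xᵏ = (2σ²)^(k/2) Γ(k/2 + 1)` turn a mean square `s = 2σ²` into the mean `√(πs)/2`.
-/

open MeasureTheory Real ProbabilityTheory

noncomputable def rayleighMeasure (σ : ℝ) : Measure ℝ :=
  volume.withDensity fun x => ENNReal.ofReal
    (Set.indicator (Set.Ici 0) (fun x => x / σ ^ 2 * Real.exp (-x ^ 2 / (2 * σ ^ 2))) x)

/-- `inl ()` indexes `c₀`, while `inr (n, false)` and `inr (n, true)` index `aₙ` and `bₙ`. -/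
def famIdx (N : ℕ) := Unit ⊕ (Fin N × Bool)

open Set

lemma integral_rayleighMeasure (σ : ℝ) (g : ℝ → ℝ) :
    ∫ x, g x ∂rayleighMeasure σ =
      ∫ x in Ioi 0, x / σ ^ 2 * exp (-x ^ 2 / (2 * σ ^ 2)) * g x := by
  have hdens : ∀ x ∈ Ici (0 : ℝ), 0 ≤ x / σ ^ 2 * exp (-x ^ 2 / (2 * σ ^ 2)) := fun x hx => by
    have : (0 : ℝ) ≤ x := hx
    positivity
  rw [rayleighMeasure, integral_withDensity_eq_integral_toReal_smul
    ((Measurable.indicator (by fun_prop) measurableSet_Ici).ennreal_ofReal)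
    (ae_of_all _ fun _ => ENNReal.ofReal_lt_top)]
  simp_rw [ENNReal.toReal_ofReal (indicator_nonneg hdens _), smul_eq_mul, ← indicator_mul_left]
  rw [integral_indicator measurableSet_Ici, integral_Ici_eq_integral_Ioi]

lemma integral_pow_rayleighMeasure {σ : ℝ} (hσ : σ ≠ 0) (k : ℕ) :
    ∫ x, x ^ k ∂rayleighMeasure σ = (2 * σ ^ 2) ^ ((k : ℝ) / 2) * Gamma (k / 2 + 1) := by
  have h2σ : 0 < 2 * σ ^ 2 := by positivity
  have hintegrand : ∀ x ∈ Ioi (0 : ℝ), x / σ ^ 2 * exp (-x ^ 2 / (2 * σ ^ 2)) * x ^ k =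
      (σ ^ 2)⁻¹ * (x ^ ((k : ℝ) + 1) * exp (-(2 * σ ^ 2)⁻¹ * x ^ (2 : ℝ))) := by
    intro x (hx : 0 < x)
    rw [rpow_add_one hx.ne', rpow_natCast, rpow_two]
    field_simp
  rw [integral_rayleighMeasure, setIntegral_congr_fun measurableSet_Ioi hintegrand,
    integral_const_mul,
    integral_rpow_mul_exp_neg_mul_rpow two_pos (by linarith [k.cast_nonneg (α := ℝ)]) (inv_pos.2 h2σ),
    inv_rpow h2σ.le, ← rpow_neg h2σ.le, neg_div, neg_neg,
    show ((k : ℝ) + 1 + 1) / 2 = k / 2 + 1 by ring, rpow_add_one h2σ.ne']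
  field_simp

lemma isProbabilityMeasure_rayleighMeasure {σ : ℝ} (hσ : σ ≠ 0) :
    IsProbabilityMeasure (rayleighMeasure σ) := by
  have h := integral_pow_rayleighMeasure hσ 0
  simp only [pow_zero, integral_const, smul_eq_mul, mul_one, CharP.cast_eq_zero, zero_div,
    rpow_zero, zero_add, Gamma_one] at h
  exact ⟨(ENNReal.toReal_eq_one_iff _).1 h⟩

lemma integrable_pow_rayleighMeasure {σ : ℝ} (hσ : σ ≠ 0) (k : ℕ) :
    Integrable (fun x => x ^ k) (rayleighMeasure σ) :=
  -- a Bochner integral that is not zero certifies integrability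
  .of_integral_ne_zero (by rw [integral_pow_rayleighMeasure hσ]; positivity)

lemma memLp_id_two_rayleighMeasure {σ : ℝ} (hσ : σ ≠ 0) : MemLp id 2 (rayleighMeasure σ) :=
  (memLp_two_iff_integrable_sq aestronglyMeasurable_id).2 (integrable_pow_rayleighMeasure hσ 2)

lemma integral_id_rayleighMeasure {σ : ℝ} (hσ : σ ≠ 0) :
    ∫ x, x ∂rayleighMeasure σ = √(π * (2 * σ ^ 2)) / 2 := by
  have h := integral_pow_rayleighMeasure hσ 1
  simp only [pow_one, Nat.cast_one] at h
  rw [h, Gamma_add_one (by norm_num), Gamma_one_half_eq, ← sqrt_eq_rpow, sqrt_mul pi_pos.le]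
  ring

lemma integral_sq_rayleighMeasure {σ : ℝ} (hσ : σ ≠ 0) :
    ∫ x, x ^ 2 ∂rayleighMeasure σ = 2 * σ ^ 2 := by
  rw [integral_pow_rayleighMeasure hσ]
  norm_num

namespace ProbabilityTheory

variable {Ω : Type*} {mΩ : MeasurableSpace Ω} {P : Measure Ω}

lemma hasLaw_rayleighMeasure_of_map_eq {X : Ω → ℝ} {σ : ℝ} (hσ : σ ≠ 0)
    (h : P.map X = rayleighMeasure σ) : HasLaw X (rayleighMeasure σ) P :=
  have := isProbabilityMeasure_rayleighMeasure hσ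
  ⟨.of_map_ne_zero (h ▸ IsProbabilityMeasure.ne_zero _), h⟩

section MeanSquare

variable {X : Ω → ℝ} {s : ℝ} (hs : 0 < s) (hX : HasLaw X (rayleighMeasure √(s / 2)) P)
include hs hX

lemma HasLaw.memLp_two_of_rayleigh : MemLp X 2 P :=
  (hX.map_eq ▸ memLp_id_two_rayleighMeasure (by positivity)).comp_of_map hX.aemeasurable

lemma HasLaw.integral_of_rayleigh : P[X] = √(π * s) / 2 := by
  rw [hX.integral_eq, integral_id_rayleighMeasure (by positivity), sq_sqrt (by positivity)]
  ring_nf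

lemma HasLaw.integral_sq_of_rayleigh : P[X ^ 2] = s := by
  change P[(fun x => x ^ 2) ∘ X] = s
  rw [hX.integral_comp (by fun_prop), integral_sq_rayleighMeasure (by positivity),
    sq_sqrt (by positivity)]
  ring

end MeanSquare

lemma IndepFun.memLp_two_mul {X Y : Ω → ℝ} (hXY : X ⟂ᵢ[P] Y) (hX : MemLp X 2 P)
    (hY : MemLp Y 2 P) : MemLp (X * Y) 2 P := by
  rw [memLp_two_iff_integrable_sq (hX.aestronglyMeasurable.mul hY.aestronglyMeasurable)]
  have := (hXY.comp (continuous_pow 2).measurable (continuous_pow 2).measurable).integrable_mul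
    hX.integrable_sq hY.integrable_sq
  simpa [mul_pow, Function.comp_def, Pi.mul_def] using this

lemma IndepFun.integral_mul_sq {X Y : Ω → ℝ} (hXY : X ⟂ᵢ[P] Y) (hX : AEStronglyMeasurable X P)
    (hY : AEStronglyMeasurable Y P) : P[(X * Y) ^ 2] = P[X ^ 2] * P[Y ^ 2] := by
  rw [mul_pow]
  exact (hXY.comp (continuous_pow 2).measurable
    (continuous_pow 2).measurable).integral_mul_eq_mul_integral (hX.pow 2) (hY.pow 2)

lemma integral_sq_sum_of_pairwise_indepFun [IsProbabilityMeasure P] {ι : Type*} {X : ι → Ω → ℝ}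
    {s : Finset ι} (hX : ∀ i ∈ s, MemLp (X i) 2 P)
    (hindep : Set.Pairwise s fun i j => X i ⟂ᵢ[P] X j) :
    P[(∑ i ∈ s, X i) ^ 2] = ∑ i ∈ s, (P[X i ^ 2] - P[X i] ^ 2) + (∑ i ∈ s, P[X i]) ^ 2 := by
  have hvar := IndepFun.variance_sum hX hindep
  have hmean : P[∑ i ∈ s, X i] = ∑ i ∈ s, P[X i] := by
    simpa only [Finset.sum_apply] using
      integral_finsetSum s fun i hi => (hX i hi).integrable one_le_two
  rw [variance_eq_sub (memLp_finsetSum' s hX), hmean,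
    Finset.sum_congr rfl fun i hi => variance_eq_sub (hX i hi)] at hvar
  linarith

lemma pairwise_indepFun_option_elim {N : ℕ} {c₀ : Ω → ℝ} {a b : Fin N → Ω → ℝ}
    (hmeas : ∀ i : famIdx N,
      AEMeasurable (Sum.elim (fun _ => c₀) (fun p => if p.2 then b p.1 else a p.1) i) P)
    (hindep : iIndepFun (m := fun _ : famIdx N => Real.measurableSpace)
      (fun i => Sum.elim (fun _ => c₀) (fun p => if p.2 then b p.1 else a p.1) i) P) :
    Pairwise fun i j : Option (Fin N) =>
      (i.elim c₀ fun n => a n * b n) ⟂ᵢ[P] (j.elim c₀ fun n => a n * b n) := by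
  have hc (n : Fin N) : c₀ ⟂ᵢ[P] (a n * b n) :=
    hindep.indepFun_mul_right₀ hmeas (.inl ()) (.inr (n, false)) (.inr (n, true))
      Sum.inl_ne_inr Sum.inl_ne_inr
  rintro (_ | n) (_ | m) hnm
  · exact absurd rfl hnm
  · exact hc m
  · exact (hc n).symm
  · have hnm : n ≠ m := fun h => hnm (congrArg some h)
    exact hindep.indepFun_mul_mul₀ hmeas (.inr (n, false)) (.inr (n, true)) (.inr (m, false))
      (.inr (m, true)) (Sum.inr_injective.ne (by simp [hnm]))
      (Sum.inr_injective.ne (by simp [hnm])) (Sum.inr_injective.ne (by simp [hnm]))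
      (Sum.inr_injective.ne (by simp [hnm]))

lemma integral_sq_add_sum_mul {N : ℕ} {c₀ : Ω → ℝ} {a b : Fin N → Ω → ℝ}
    (hindep : iIndepFun (m := fun _ : famIdx N => Real.measurableSpace)
      (fun i => Sum.elim (fun _ => c₀) (fun p => if p.2 then b p.1 else a p.1) i) P)
    (hc : MemLp c₀ 2 P) (ha : ∀ n, MemLp (a n) 2 P) (hb : ∀ n, MemLp (b n) 2 P) :
    ∫ ω, (c₀ ω + ∑ n, a n ω * b n ω) ^ 2 ∂P =
      P[c₀ ^ 2] - P[c₀] ^ 2 + ∑ n, (P[a n ^ 2] * P[b n ^ 2] - (P[a n] * P[b n]) ^ 2)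
        + (P[c₀] + ∑ n, P[a n] * P[b n]) ^ 2 := by
  have := hindep.isProbabilityMeasure
  have hmeas : ∀ i : famIdx N,
      AEMeasurable (Sum.elim (fun _ => c₀) (fun p => if p.2 then b p.1 else a p.1) i) P := by
    rintro (_ | ⟨n, _ | _⟩)
    exacts [hc.aemeasurable, (ha n).aemeasurable, (hb n).aemeasurable]
  have hab (n : Fin N) : IndepFun (a n) (b n) P :=
    hindep.indepFun (i := .inr (n, false)) (j := .inr (n, true)) (Sum.inr_injective.ne (by simp))
  set X : Option (Fin N) → Ω → ℝ := fun i => i.elim c₀ fun n => a n * b n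
  have hX : ∀ i ∈ Finset.univ, MemLp (X i) 2 P := by
    rintro (_ | n) -
    exacts [hc, (hab n).memLp_two_mul (ha n) (hb n)]
  have hsum := integral_sq_sum_of_pairwise_indepFun hX
    ((pairwise_indepFun_option_elim hmeas hindep).set_pairwise _)
  have hS : (∑ i, X i) ^ 2 = fun ω => (c₀ ω + ∑ n, a n ω * b n ω) ^ 2 := by
    ext ω; simp [X, Fintype.sum_option]
  simp only [Fintype.sum_option, X, Option.elim] at hsum hS
  rw [← hS, hsum]
  have hm (n : Fin N) := (ha n).aestronglyMeasurable
  have hm' (n : Fin N) := (hb n).aestronglyMeasurable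
  simp only [fun n => (hab n).integral_mul_sq (hm n) (hm' n),
    fun n => (hab n).integral_mul_eq_mul_integral (hm n) (hm' n)]

end ProbabilityTheory

theorem second_moment_perfect_phase_general
    {Ω : Type*} [MeasureSpace Ω]
    (N : ℕ) (c₀ : Ω → ℝ) (a b : Fin N → Ω → ℝ)
    (ς ϱ ϑ : ℝ) (hς : 0 < ς) (hϱ : 0 < ϱ) (hϑ : 0 < ϑ)
    (hlaw₀ : Measure.map c₀ volume = rayleighMeasure (Real.sqrt (ς / 2)))
    (hlawa : ∀ n, Measure.map (a n) volume = rayleighMeasure (Real.sqrt (ϱ / 2)))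
    (hlawb : ∀ n, Measure.map (b n) volume = rayleighMeasure (Real.sqrt (ϑ / 2)))
    (hindep : iIndepFun (m := fun _ : famIdx N => Real.measurableSpace)
      (fun i => Sum.elim (fun _ => c₀) (fun p => if p.2 then b p.1 else a p.1) i)
      volume) :
    (∫ ω, (c₀ ω + ∑ n, a n ω * b n ω) ^ 2) =
      ς + N * ϱ * ϑ + π ^ 2 * N * (N - 1) / 16 * (ϱ * ϑ)
        + π * N / 4 * Real.sqrt (π * ς * ϱ * ϑ) := by
  have hc := hasLaw_rayleighMeasure_of_map_eq (by positivity) hlaw₀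
  have ha n := hasLaw_rayleighMeasure_of_map_eq (by positivity) (hlawa n)
  have hb n := hasLaw_rayleighMeasure_of_map_eq (by positivity) (hlawb n)
  rw [integral_sq_add_sum_mul hindep (hc.memLp_two_of_rayleigh hς)
    (fun n => (ha n).memLp_two_of_rayleigh hϱ) (fun n => (hb n).memLp_two_of_rayleigh hϑ)]
  simp only [hc.integral_sq_of_rayleigh hς, hc.integral_of_rayleigh hς,
    fun n => (ha n).integral_sq_of_rayleigh hϱ, fun n => (ha n).integral_of_rayleigh hϱ,
    fun n => (hb n).integral_sq_of_rayleigh hϑ, fun n => (hb n).integral_of_rayleigh hϑ,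
    Finset.sum_const, Finset.card_univ, Fintype.card_fin, nsmul_eq_mul]
  have hB : √(π * ϱ) ^ 2 = π * ϱ := sq_sqrt (by positivity)
  have hC : √(π * ϑ) ^ 2 = π * ϑ := sq_sqrt (by positivity)
  have hABC : √(π * ς) * √(π * ϱ) * √(π * ϑ) = π * √(π * ς * ϱ * ϑ) := by
    rw [← sqrt_mul (by positivity), ← sqrt_mul (by positivity),
      show π * ς * (π * ϱ) * (π * ϑ) = π ^ 2 * (π * ς * ϱ * ϑ) by ring,
      sqrt_mul (by positivity), sqrt_sq pi_pos.le]
  linear_combination (N ^ 2 - N : ℝ) / 16 * (√(π * ϱ) ^ 2 * hC + π * ϑ * hB) + N / 4 * hABC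

/-- With perfect phase alignment (`φ_n = 0`), mutually independent Rayleigh variables
`c₀, a_n, b_n` with `E[c₀²] = ς`, `E[a_n²] = ϱ`, `E[b_n²] = ϑ` (so the Rayleigh scales
are `√(ς/2)`, `√(ϱ/2)`, `√(ϑ/2)`) satisfy
`E[(c₀ + ∑ₙ aₙbₙ)²] = ς + Nϱϑ + (π²N(N-1)/16)ϱϑ + (πN/4)√(πςϱϑ)`. -/
theorem second_moment_perfect_phase
    {Ω : Type*} [MeasureSpace Ω] [IsProbabilityMeasure (volume : Measure Ω)]
    (N : ℕ) (c₀ : Ω → ℝ) (a b : Fin N → Ω → ℝ)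
    (ς ϱ ϑ : ℝ) (hς : 0 < ς) (hϱ : 0 < ϱ) (hϑ : 0 < ϑ)
    (hlaw₀ : Measure.map c₀ volume = rayleighMeasure (Real.sqrt (ς / 2)))
    (hlawa : ∀ n, Measure.map (a n) volume = rayleighMeasure (Real.sqrt (ϱ / 2)))
    (hlawb : ∀ n, Measure.map (b n) volume = rayleighMeasure (Real.sqrt (ϑ / 2)))
    (hindep : iIndepFun (m := fun _ : famIdx N => Real.measurableSpace)
      (fun i => Sum.elim (fun _ => c₀) (fun p => if p.2 then b p.1 else a p.1) i)
      volume) :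
    (∫ ω, (c₀ ω + ∑ n, a n ω * b n ω) ^ 2) =
      ς + N * ϱ * ϑ + π ^ 2 * N * (N - 1) / 16 * (ϱ * ϑ)
        + π * N / 4 * Real.sqrt (π * ς * ϱ * ϑ) :=
  second_moment_perfect_phase_general N c₀ a b ς ϱ ϑ hς hϱ hϑ hlaw₀ hlawa hlawb hindep
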